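/- Suppose v̂ : [0,T] × (0,∞) → ℝ is continuously differentiable in t and twice continuously differentiable in Y, and satisfies the reduced HJB equation: for all (t,Y) ∈ [0,T] × (0,∞), ∂_t v̂(t,Y) + sup_{a ∈ ℝ, γ ≥ 0} [ −λ(t)·v̂(t,Y) − e^{−b·t}·u(γ)·v̂(t,Y) − λ(t) + ((a·μ + (1−a)·r)·Y − γ·(1−F(t))^C)·∂_Y v̂(t,Y) + (1/2)·σ²·a²·Y²·∂²_{YY} v̂(t,Y) ] = 0, the supremum being finite. Then the function v(t,U,Y) := (1 − F(t))·e^{−U}·v̂(t,Y) satisfies the full HJB equation with w(U) = −e^{−U}: for all (t,U,Y) ∈ [0,T] × ℝ × (0,∞), ∂_t v + sup_{a ∈ ℝ, γ ≥ 0} [ e^{−b·t}·u(γ)·∂_U v + ((a·μ + (1−a)·r)·Y − γ·(1−F(t))^C)·∂_Y v + (1/2)·σ²·a²·Y²·∂²_{YY} v − p(t)·e^{−U} ] = 0. -/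

import Mathlib

/-! The ansatz `v = (1 - F t) e^{-U} v̂` pulls the positive factor `c = (1 - F t) e^{-U}` out of
`∂_U v`, `∂_Y v` and `∂²_{YY} v`, so every candidate value of the full Hamiltonian is `c` times the
corresponding reduced candidate plus `p t e^{-U} v̂` (the mortality term `-p e^{-U}` is `c · (-λ)`).
An increasing affine map commutes with `sSup`, and `∂_t v = c ∂_t v̂ - p e^{-U} v̂` cancels the
constant. -/

noncomputable section

/-- The set over which the supremum is taken in the reduced HJB equation for
exponential Kihlstrom–Mirman preferences `w(x) = −exp(−x)`. -/
def reducedHJBSet (μ r b σ : ℝ) (C : ℕ) (u F p : ℝ → ℝ)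
    (vhat vhat_Y vhat_YY : ℝ → ℝ → ℝ) (t Y : ℝ) : Set ℝ :=
  {z : ℝ | ∃ a γ : ℝ, 0 ≤ γ ∧ z =
    -(p t / (1 - F t)) * vhat t Y - Real.exp (-(b * t)) * u γ * vhat t Y
      - p t / (1 - F t)
      + ((a * μ + (1 - a) * r) * Y - γ * (1 - F t) ^ C) * vhat_Y t Y
      + 1 / 2 * σ ^ 2 * a ^ 2 * Y ^ 2 * vhat_YY t Y}

/-- The set over which the supremum is taken in the full HJB equation with
`w(U) = −e^{−U}`. -/
def fullHJBSet (μ r b σ : ℝ) (C : ℕ) (u F p : ℝ → ℝ)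
    (v_U v_Y v_YY : ℝ → ℝ → ℝ → ℝ) (t U Y : ℝ) : Set ℝ :=
  {z : ℝ | ∃ a γ : ℝ, 0 ≤ γ ∧ z =
    Real.exp (-(b * t)) * u γ * v_U t U Y
      + ((a * μ + (1 - a) * r) * Y - γ * (1 - F t) ^ C) * v_Y t U Y
      + 1 / 2 * σ ^ 2 * a ^ 2 * Y ^ 2 * v_YY t U Y
      - p t * Real.exp (-U)}

open Real

theorem csSup_image_affine {s : Set ℝ} (hne : s.Nonempty) (hbdd : BddAbove s) {c : ℝ}
    (hc : 0 ≤ c) (d : ℝ) :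
    BddAbove ((fun z => c * z + d) '' s) ∧ sSup ((fun z => c * z + d) '' s) = c * sSup s + d := by
  have hmono : Monotone fun z : ℝ => c * z + d := fun x y hxy => by
    simpa using mul_le_mul_of_nonneg_left hxy hc
  exact ⟨hmono.map_bddAbove hbdd,
    (hmono.map_csSup_of_continuousAt (by fun_prop) hne hbdd).symm⟩

theorem reducedHJBSet_nonempty (μ r b σ : ℝ) (C : ℕ) (u F p : ℝ → ℝ)
    (vhat vhat_Y vhat_YY : ℝ → ℝ → ℝ) (t Y : ℝ) :
    (reducedHJBSet μ r b σ C u F p vhat vhat_Y vhat_YY t Y).Nonempty :=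
  ⟨_, 0, 0, le_rfl, rfl⟩

theorem fullHJBSet_eq_image_reducedHJBSet {μ r b σ : ℝ} {C : ℕ} {u F p : ℝ → ℝ}
    {vhat vhat_Y vhat_YY : ℝ → ℝ → ℝ} {v_U v_Y v_YY : ℝ → ℝ → ℝ → ℝ} {t U Y : ℝ}
    (hF : F t ≠ 1)
    (hU : v_U t U Y = -((1 - F t) * exp (-U) * vhat t Y))
    (hY : v_Y t U Y = (1 - F t) * exp (-U) * vhat_Y t Y)
    (hYY : v_YY t U Y = (1 - F t) * exp (-U) * vhat_YY t Y) :
    fullHJBSet μ r b σ C u F p v_U v_Y v_YY t U Y =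
      (fun z => (1 - F t) * exp (-U) * z + p t * exp (-U) * vhat t Y) ''
        reducedHJBSet μ r b σ C u F p vhat vhat_Y vhat_YY t Y := by
  have hF' : 1 - F t ≠ 0 := sub_ne_zero.mpr hF.symm
  ext z
  simp only [fullHJBSet, reducedHJBSet, Set.mem_ofPred_eq, Set.mem_image, hU, hY, hYY]
  constructor
  · rintro ⟨a, γ, hγ, rfl⟩
    exact ⟨_, ⟨a, γ, hγ, rfl⟩, by field_simp; ring⟩
  · rintro ⟨_, ⟨a, γ, hγ, rfl⟩, rfl⟩
    exact ⟨a, γ, hγ, by field_simp; ring⟩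

theorem stmt_13_general (μ r b σ T : ℝ)
    (C : ℕ)
    (u : ℝ → ℝ)
    (F p : ℝ → ℝ) (hF : ∀ t ∈ Set.Icc 0 T, HasDerivAt F (p t) t)
    (hF1 : ∀ t ∈ Set.Icc 0 T, F t < 1)
    (vhat vhat_t vhat_Y vhat_YY : ℝ → ℝ → ℝ)
    (hvt : ∀ t Y, HasDerivAt (fun s => vhat s Y) (vhat_t t Y) t)
    (hvY : ∀ t Y, HasDerivAt (fun Z => vhat t Z) (vhat_Y t Y) Y)
    (hvYY : ∀ t Y, HasDerivAt (fun Z => vhat_Y t Z) (vhat_YY t Y) Y)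
    (hbdd : ∀ t ∈ Set.Icc 0 T, ∀ Y ∈ Set.Ioi (0:ℝ),
      BddAbove (reducedHJBSet μ r b σ C u F p vhat vhat_Y vhat_YY t Y))
    (hHJB : ∀ t ∈ Set.Icc 0 T, ∀ Y ∈ Set.Ioi (0:ℝ),
      vhat_t t Y + sSup (reducedHJBSet μ r b σ C u F p vhat vhat_Y vhat_YY t Y) = 0) :
    ∃ v_t v_U v_Y v_YY : ℝ → ℝ → ℝ → ℝ,
      (∀ t U Y, t ∈ Set.Icc 0 T → Y ∈ Set.Ioi (0:ℝ) →
        HasDerivAt (fun s => (1 - F s) * Real.exp (-U) * vhat s Y) (v_t t U Y) t) ∧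
      (∀ t U Y, t ∈ Set.Icc 0 T → Y ∈ Set.Ioi (0:ℝ) →
        HasDerivAt (fun V => (1 - F t) * Real.exp (-V) * vhat t Y) (v_U t U Y) U) ∧
      (∀ t U Y, t ∈ Set.Icc 0 T →
        HasDerivAt (fun Z => (1 - F t) * Real.exp (-U) * vhat t Z) (v_Y t U Y) Y) ∧
      (∀ t U Y, t ∈ Set.Icc 0 T → HasDerivAt (fun Z => v_Y t U Z) (v_YY t U Y) Y) ∧
      ∀ t ∈ Set.Icc 0 T, ∀ U : ℝ, ∀ Y ∈ Set.Ioi (0:ℝ),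
        BddAbove (fullHJBSet μ r b σ C u F p v_U v_Y v_YY t U Y) ∧
        v_t t U Y + sSup (fullHJBSet μ r b σ C u F p v_U v_Y v_YY t U Y) = 0 := by
  refine ⟨fun t U Y => -p t * exp (-U) * vhat t Y + (1 - F t) * exp (-U) * vhat_t t Y,
    fun t U Y => -((1 - F t) * exp (-U) * vhat t Y),
    fun t U Y => (1 - F t) * exp (-U) * vhat_Y t Y,
    fun t U Y => (1 - F t) * exp (-U) * vhat_YY t Y,
    fun t U Y ht _ => ?_, fun t U Y _ _ => ?_,
    fun t U Y _ => (hvY t Y).const_mul _, fun t U Y _ => (hvYY t Y).const_mul _,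
    fun t ht U Y hY => ?_⟩
  · exact ((((hF t ht).const_sub 1).mul_const (exp (-U))).mul (hvt t Y)).congr_deriv (by ring)
  · simpa [mul_comm, mul_left_comm] using
      ((hasDerivAt_neg U).exp.const_mul (1 - F t)).mul_const (vhat t Y)
  · rw [fullHJBSet_eq_image_reducedHJBSet (U := U) (Y := Y) (hF1 t ht).ne rfl rfl rfl]
    obtain ⟨hbdd', hsup⟩ := csSup_image_affine (reducedHJBSet_nonempty ..) (hbdd t ht Y hY)
      (mul_pos (sub_pos.mpr (hF1 t ht)) (exp_pos (-U))).le (p t * exp (-U) * vhat t Y)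
    refine ⟨hbdd', ?_⟩
    rw [hsup, eq_neg_of_add_eq_zero_right (hHJB t ht Y hY)]
    ring

/-- Dimension reduction for the HJB equation with exponential Kihlstrom–Mirman
preferences: if `v̂` solves the reduced HJB equation on `[0,T] × (0,∞)` (with finite
supremum), then `v(t,U,Y) = (1 − F(t))·e^{−U}·v̂(t,Y)` solves the full HJB equation. -/
theorem stmt_13 (μ r b σ T : ℝ) (hσ : 0 < σ) (hT : 0 < T)
    (C : ℕ) (hC : C = 0 ∨ C = 1)
    (u : ℝ → ℝ)
    (F p : ℝ → ℝ) (hF : ∀ t ∈ Set.Icc 0 T, HasDerivAt F (p t) t)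
    (hF1 : ∀ t ∈ Set.Icc 0 T, F t < 1)
    (vhat vhat_t vhat_Y vhat_YY : ℝ → ℝ → ℝ)
    (hvt : ∀ t Y, HasDerivAt (fun s => vhat s Y) (vhat_t t Y) t)
    (hvY : ∀ t Y, HasDerivAt (fun Z => vhat t Z) (vhat_Y t Y) Y)
    (hvYY : ∀ t Y, HasDerivAt (fun Z => vhat_Y t Z) (vhat_YY t Y) Y)
    (hct : Continuous fun q : ℝ × ℝ => vhat_t q.1 q.2)
    (hcY : Continuous fun q : ℝ × ℝ => vhat_Y q.1 q.2)
    (hcYY : Continuous fun q : ℝ × ℝ => vhat_YY q.1 q.2)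
    (hbdd : ∀ t ∈ Set.Icc 0 T, ∀ Y ∈ Set.Ioi (0:ℝ),
      BddAbove (reducedHJBSet μ r b σ C u F p vhat vhat_Y vhat_YY t Y))
    (hHJB : ∀ t ∈ Set.Icc 0 T, ∀ Y ∈ Set.Ioi (0:ℝ),
      vhat_t t Y + sSup (reducedHJBSet μ r b σ C u F p vhat vhat_Y vhat_YY t Y) = 0) :
    ∃ v_t v_U v_Y v_YY : ℝ → ℝ → ℝ → ℝ,
      (∀ t U Y, t ∈ Set.Icc 0 T → Y ∈ Set.Ioi (0:ℝ) →
        HasDerivAt (fun s => (1 - F s) * Real.exp (-U) * vhat s Y) (v_t t U Y) t) ∧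
      (∀ t U Y, t ∈ Set.Icc 0 T → Y ∈ Set.Ioi (0:ℝ) →
        HasDerivAt (fun V => (1 - F t) * Real.exp (-V) * vhat t Y) (v_U t U Y) U) ∧
      (∀ t U Y, t ∈ Set.Icc 0 T →
        HasDerivAt (fun Z => (1 - F t) * Real.exp (-U) * vhat t Z) (v_Y t U Y) Y) ∧
      (∀ t U Y, t ∈ Set.Icc 0 T → HasDerivAt (fun Z => v_Y t U Z) (v_YY t U Y) Y) ∧
      ∀ t ∈ Set.Icc 0 T, ∀ U : ℝ, ∀ Y ∈ Set.Ioi (0:ℝ),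
        BddAbove (fullHJBSet μ r b σ C u F p v_U v_Y v_YY t U Y) ∧
        v_t t U Y + sSup (fullHJBSet μ r b σ C u F p v_U v_Y v_YY t U Y) = 0 :=
  stmt_13_general μ r b σ T C u F p hF hF1 vhat vhat_t vhat_Y vhat_YY hvt hvY hvYY hbdd hHJB

end
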